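/- Let G be a triangle-free graph with m edges. Then the spectral radius of its adjacency matrix satisfies ρ(G) ≤ √m. -/

import Mathlib

/-!
For a nonnegative test vector `y` write `S = A y`. In a triangle-free graph adjacent vertices have
disjoint neighbourhoods, so `S u + S v ≤ ∑ y` along every edge; summing `y u y v (S u + S v)` over
the edges and applying Cauchy–Schwarz with weights `y` gives the Motzkin–Straus type bound
`2 ⟪y, A y⟫ ≤ (∑ y)²`. For an arbitrary `x`, Cauchy–Schwarz over the `2m` darts gives
`⟪x, A x⟫² ≤ 2m ⟪x², A x²⟫`, and the bound with `y = x²` turns this into `⟪x, A x⟫ ≤ √m ‖x‖²`.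
-/

open Matrix

/-- The real adjacency matrix of a simple graph. -/
noncomputable def adjMat {V : Type*} [Fintype V] (G : SimpleGraph V) : Matrix V V ℝ :=
  Matrix.of fun i j =>
    haveI := Classical.propDecidable (G.Adj i j)
    if G.Adj i j then (1 : ℝ) else 0

/-- The adjacency spectral radius of a finite simple graph, as the supremum of
the Rayleigh quotient of its (symmetric) adjacency matrix. -/
noncomputable def specRad {V : Type*} [Fintype V] (G : SimpleGraph V) : ℝ :=
  ⨆ x : {x : V → ℝ // x ≠ 0}, (x.1 ⬝ᵥ (adjMat G *ᵥ x.1)) / (x.1 ⬝ᵥ x.1)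

open Finset

theorem Matrix.sq_dotProduct_mulVec_le_of_nonneg {m n R : Type*} [Fintype m] [Fintype n]
    [CommRing R] [LinearOrder R] [IsStrictOrderedRing R] {A : Matrix m n R}
    (hA : ∀ i j, 0 ≤ A i j) (v : m → R) (w : n → R) :
    (v ⬝ᵥ A *ᵥ w) ^ 2 ≤ (1 ⬝ᵥ A *ᵥ 1) * ((v * v) ⬝ᵥ A *ᵥ (w * w)) := by
  simp only [dot_mulVec_eq_sum_sum, ← Fintype.sum_prod_type', Pi.mul_apply, Pi.one_apply, one_mul,
    mul_one]
  exact sum_sq_le_sum_mul_sum_of_sq_le_mul _ (fun p _ => hA _ _)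
    (fun p _ => mul_nonneg (mul_nonneg (mul_self_nonneg _) (hA _ _)) (mul_self_nonneg _))
    (fun p _ => le_of_eq (by ring))

namespace SimpleGraph

variable {V R : Type*} [Fintype V] {G : SimpleGraph V} [DecidableRel G.Adj]

theorem dotProduct_adjMatrix_mulVec_comm [CommSemiring R] (y z : V → R) :
    y ⬝ᵥ G.adjMatrix R *ᵥ z = z ⬝ᵥ G.adjMatrix R *ᵥ y := by
  rw [dotProduct_mulVec, ← mulVec_transpose, transpose_adjMatrix, dotProduct_comm]

theorem dotProduct_one_adjMatrix_mulVec_one [CommSemiring R] {m : ℕ} (hm : G.edgeSet.ncard = m) :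
    (1 : V → R) ⬝ᵥ G.adjMatrix R *ᵥ 1 = 2 * m := by
  rw [dotProduct_comm, ← natCast_card_dart_eq_dotProduct, dart_card_eq_twice_card_edges, ← hm,
    Set.ncard_eq_toFinset_card']
  push_cast
  rfl

theorem CliqueFree.disjoint_neighborFinset (hG : G.CliqueFree 3) {u v : V} (huv : G.Adj u v) :
    Disjoint (G.neighborFinset u) (G.neighborFinset v) := by
  classical
  exact Finset.disjoint_left.2 fun w hu hv => hG {u, v, w} <|
    is3Clique_triple_iff.2 ⟨huv, (G.mem_neighborFinset u w).1 hu, (G.mem_neighborFinset v w).1 hv⟩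

variable [CommRing R] [LinearOrder R] [IsStrictOrderedRing R]

omit [Fintype V] in
theorem adjMatrix_apply_nonneg (i j : V) : 0 ≤ G.adjMatrix R i j := by
  rw [adjMatrix_apply]
  split_ifs <;> simp

theorem CliqueFree.adjMatrix_mulVec_add_le (hG : G.CliqueFree 3) {y : V → R} (hy : 0 ≤ y)
    {u v : V} (huv : G.Adj u v) :
    (G.adjMatrix R *ᵥ y) u + (G.adjMatrix R *ᵥ y) v ≤ ∑ i, y i := by
  classical
  rw [adjMatrix_mulVec_apply, adjMatrix_mulVec_apply,
    ← sum_union (hG.disjoint_neighborFinset huv)]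
  exact sum_le_sum_of_subset_of_nonneg (subset_univ _) fun i _ _ => hy i

theorem CliqueFree.two_mul_sum_mul_sq_adjMatrix_mulVec_le (hG : G.CliqueFree 3) {y : V → R}
    (hy : 0 ≤ y) :
    2 * ∑ u, y u * (G.adjMatrix R *ᵥ y) u ^ 2 ≤ (∑ i, y i) * (y ⬝ᵥ G.adjMatrix R *ᵥ y) := by
  set S := G.adjMatrix R *ᵥ y
  calc 2 * ∑ u, y u * S u ^ 2
        = (y * S) ⬝ᵥ G.adjMatrix R *ᵥ y + y ⬝ᵥ G.adjMatrix R *ᵥ (y * S) := by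
        rw [dotProduct_adjMatrix_mulVec_comm y (y * S), two_mul]
        simp only [dotProduct, Pi.mul_apply, S]
        congr 1 <;> exact sum_congr rfl fun u _ => by ring
    _ = ∑ i, ∑ j, if G.Adj i j then y i * y j * (S i + S j) else 0 := by
        simp only [dotProduct_mulVec_adjMatrix, ← sum_add_distrib, Pi.mul_apply]
        refine sum_congr rfl fun i _ => sum_congr rfl fun j _ => ?_
        split_ifs <;> ring
    _ ≤ ∑ i, ∑ j, if G.Adj i j then y i * y j * ∑ k, y k else 0 := by
        refine sum_le_sum fun i _ => sum_le_sum fun j _ => ?_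
        split_ifs with hij
        · exact mul_le_mul_of_nonneg_left (hG.adjMatrix_mulVec_add_le hy hij)
            (mul_nonneg (hy i) (hy j))
        · rfl
    _ = (∑ i, y i) * (y ⬝ᵥ G.adjMatrix R *ᵥ y) := by
        rw [dotProduct_mulVec_adjMatrix, mul_sum]
        refine sum_congr rfl fun i _ => ?_
        rw [mul_sum]
        refine sum_congr rfl fun j _ => ?_
        split_ifs <;> ring

theorem CliqueFree.two_mul_dotProduct_adjMatrix_mulVec_le (hG : G.CliqueFree 3) {y : V → R}
    (hy : 0 ≤ y) : 2 * (y ⬝ᵥ G.adjMatrix R *ᵥ y) ≤ (∑ i, y i) ^ 2 := by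
  set S := G.adjMatrix R *ᵥ y
  set W := ∑ u, y u * S u ^ 2
  have hS : 0 ≤ S := fun u => by
    simp only [S, adjMatrix_mulVec_apply]
    exact sum_nonneg fun i _ => hy i
  have hCS : (y ⬝ᵥ S) ^ 2 ≤ (∑ i, y i) * W :=
    sum_sq_le_sum_mul_sum_of_sq_le_mul _ (fun i _ => hy i)
      (fun i _ => mul_nonneg (hy i) (sq_nonneg _)) (fun i _ => le_of_eq (by ring))
  obtain hT | hT := (dotProduct_nonneg_of_nonneg hy hS).eq_or_lt
  · rw [← hT, mul_zero]
    positivity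
  · refine le_of_mul_le_mul_right ?_ hT
    calc 2 * (y ⬝ᵥ S) * (y ⬝ᵥ S) ≤ (∑ i, y i) * (2 * W) := by nlinarith
      _ ≤ (∑ i, y i) * ((∑ i, y i) * (y ⬝ᵥ S)) :=
        mul_le_mul_of_nonneg_left (hG.two_mul_sum_mul_sq_adjMatrix_mulVec_le hy)
          (sum_nonneg fun i _ => hy i)
      _ = (∑ i, y i) ^ 2 * (y ⬝ᵥ S) := by ring

end SimpleGraph

theorem adjMat_eq_adjMatrix {V : Type*} [Fintype V] (G : SimpleGraph V) [DecidableRel G.Adj] :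
    adjMat G = G.adjMatrix ℝ := by
  ext i j
  simp [adjMat, SimpleGraph.adjMatrix_apply]

/-- Nosal's theorem: a triangle-free graph with `m` edges has spectral radius
at most `√m`. -/
theorem stmt_9 {V : Type*} [Fintype V] (G : SimpleGraph V) (m : ℕ)
    (hfree : G.CliqueFree 3) (hm : G.edgeSet.ncard = m) :
    specRad G ≤ Real.sqrt m := by
  classical
  set A := G.adjMatrix ℝ
  refine Real.iSup_le (fun ⟨x, hx⟩ => ?_) (Real.sqrt_nonneg _)
  have hxx : 0 < x ⬝ᵥ x := lt_of_le_of_ne (sum_nonneg fun i _ => mul_self_nonneg (x i))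
    (Ne.symm (dotProduct_self_eq_zero.not.2 hx))
  have hQ : (x ⬝ᵥ A *ᵥ x) ^ 2 ≤ m * (x ⬝ᵥ x) ^ 2 :=
    calc (x ⬝ᵥ A *ᵥ x) ^ 2 ≤ (1 ⬝ᵥ A *ᵥ 1) * ((x * x) ⬝ᵥ A *ᵥ (x * x)) :=
          sq_dotProduct_mulVec_le_of_nonneg SimpleGraph.adjMatrix_apply_nonneg x x
      _ = m * (2 * ((x * x) ⬝ᵥ A *ᵥ (x * x))) := by
          rw [SimpleGraph.dotProduct_one_adjMatrix_mulVec_one hm]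
          ring
      _ ≤ m * (x ⬝ᵥ x) ^ 2 := by
          gcongr
          exact hfree.two_mul_dotProduct_adjMatrix_mulVec_le fun i => mul_self_nonneg (x i)
  rw [adjMat_eq_adjMatrix]
  refine (le_abs_self _).trans (Real.abs_le_sqrt ?_)
  rw [div_pow, div_le_iff₀ (by positivity)]
  exact hQ
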